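/- Define Δ(n) := -μ(n/4) if 4 | n and Δ(n) := 0 otherwise. Then Δ lies in the kernel of α-contraction: ∑_{d : α(d) = n} Δ(d) = 0 for all n ≥ 1. -/

import Mathlib

/-!
Grouping the divisors of `fib n` by their rank of apparition `α`, which divides `n`, gives
`∑_{d ∣ n} f_α(d) = ∑_{m ∣ fib n} f(m)`, so by Möbius inversion `f_α` vanishes as soon as every
such divisor sum of `f` does. For `Δ` the divisor sum over `N = fib n` reduces, after writing
`m = 4k`, to `-∑_{k ∣ N/4} μ(k)`, which vanishes because `N ≠ 4`: no Fibonacci number equals `4`.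
-/

open Finset

noncomputable def fibAlpha (n : ℕ) : ℕ := sInf {m | 0 < m ∧ n ∣ Nat.fib m}

noncomputable def alphaCon (f : ℕ → ℤ) (n : ℕ) : ℤ :=
  ∑ m ∈ (Icc 1 (Nat.fib n)).filter (fun m => fibAlpha m = n), f m

open ArithmeticFunction
open scoped ArithmeticFunction.Moebius

lemma fibAlpha_pos_of_dvd_fib {m j : ℕ} (hj : 0 < j) (h : m ∣ Nat.fib j) : 0 < fibAlpha m :=
  (Nat.sInf_mem (s := {t | 0 < t ∧ m ∣ Nat.fib t}) ⟨j, hj, h⟩).1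

lemma dvd_fib_fibAlpha {m : ℕ} (hm : 0 < fibAlpha m) : m ∣ Nat.fib (fibAlpha m) :=
  (Nat.sInf_mem (Nat.nonempty_of_pos_sInf hm)).2

lemma dvd_fib_iff_fibAlpha_dvd {m j : ℕ} (hm : 0 < fibAlpha m) :
    m ∣ Nat.fib j ↔ fibAlpha m ∣ j := by
  refine ⟨fun h => ?_, fun h => (dvd_fib_fibAlpha hm).trans (Nat.fib_dvd _ _ h)⟩
  -- `fib (gcd a j) = gcd (fib a) (fib j)`, so `gcd a j` competes with `a` for the infimum.
  have hgcd : m ∣ Nat.fib (Nat.gcd (fibAlpha m) j) := by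
    rw [Nat.fib_gcd]
    exact Nat.dvd_gcd (dvd_fib_fibAlpha hm) h
  have hle : fibAlpha m ≤ Nat.gcd (fibAlpha m) j :=
    Nat.sInf_le ⟨Nat.gcd_pos_of_pos_left _ hm, hgcd⟩
  rw [← le_antisymm (Nat.gcd_le_left _ hm) hle]
  exact Nat.gcd_dvd_right _ _

lemma fibAlpha_dvd_of_dvd_fib {m j : ℕ} (hj : 0 < j) (h : m ∣ Nat.fib j) : fibAlpha m ∣ j :=
  (dvd_fib_iff_fibAlpha_dvd (fibAlpha_pos_of_dvd_fib hj h)).1 h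

lemma alphaCon_eq_sum_divisors_fib (f : ℕ → ℤ) {d N : ℕ} (hN : N ≠ 0) (hd : d ∣ N) :
    alphaCon f d = ∑ m ∈ (Nat.fib N).divisors with fibAlpha m = d, f m := by
  have hd₀ : 0 < d := Nat.pos_of_dvd_of_pos hd (Nat.pos_of_ne_zero hN)
  refine sum_congr (ext fun m => ?_) fun _ _ => rfl
  simp only [mem_filter, mem_Icc, Nat.mem_divisors, and_congr_left_iff]
  rintro rfl
  have hm : m ∣ Nat.fib (fibAlpha m) := dvd_fib_fibAlpha hd₀
  have hfib : 0 < Nat.fib (fibAlpha m) := Nat.fib_pos.2 hd₀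
  exact iff_of_true ⟨Nat.pos_of_dvd_of_pos hm hfib, Nat.le_of_dvd hfib hm⟩
    ⟨hm.trans (Nat.fib_dvd _ _ hd), (Nat.fib_pos.2 (Nat.pos_of_ne_zero hN)).ne'⟩

lemma sum_divisors_alphaCon (f : ℕ → ℤ) {N : ℕ} (hN : N ≠ 0) :
    ∑ d ∈ N.divisors, alphaCon f d = ∑ m ∈ (Nat.fib N).divisors, f m := by
  rw [sum_congr rfl fun d hd => alphaCon_eq_sum_divisors_fib f hN (Nat.dvd_of_mem_divisors hd)]
  refine sum_fiberwise_of_maps_to (fun m hm => ?_) f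
  rw [Nat.mem_divisors] at hm ⊢
  exact ⟨fibAlpha_dvd_of_dvd_fib (Nat.pos_of_ne_zero hN) hm.1, hN⟩

lemma alphaCon_eq_zero_of_sum_divisors_fib_eq_zero {f : ℕ → ℤ}
    (hf : ∀ N ≠ 0, ∑ m ∈ (Nat.fib N).divisors, f m = 0) {n : ℕ} (hn : 0 < n) :
    alphaCon f n = 0 := by
  have hinv := sum_eq_iff_sum_smul_moebius_eq.1
    (fun N hN => (sum_divisors_alphaCon f hN.ne').trans (hf N hN.ne')) n hn
  simpa only [smul_zero, sum_const_zero] using hinv.symm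

lemma sum_divisors_filter_dvd_comp_div {M : Type*} [AddCommMonoid M] (g : ℕ → M) {a N : ℕ}
    (ha : a ≠ 0) (haN : a ∣ N) :
    ∑ m ∈ N.divisors with a ∣ m, g (m / a) = ∑ k ∈ (N / a).divisors, g k := by
  obtain ⟨b, rfl⟩ := haN
  rw [Nat.mul_div_cancel_left b (Nat.pos_of_ne_zero ha)]
  refine sum_nbij' (· / a) (a * ·) (fun m hm => ?_) (fun k hk => ?_) (fun m hm => ?_)
    (fun k _ => Nat.mul_div_cancel_left k (Nat.pos_of_ne_zero ha)) fun _ _ => rfl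
  · obtain ⟨hm, k, rfl⟩ := mem_filter.1 hm
    obtain ⟨hkb, hab⟩ := Nat.mem_divisors.1 hm
    rw [Nat.mul_div_cancel_left k (Nat.pos_of_ne_zero ha), Nat.mem_divisors]
    exact ⟨Nat.dvd_of_mul_dvd_mul_left (Nat.pos_of_ne_zero ha) hkb, right_ne_zero_of_mul hab⟩
  · obtain ⟨hkb, hb⟩ := Nat.mem_divisors.1 hk
    exact mem_filter.2 ⟨Nat.mem_divisors.2 ⟨mul_dvd_mul_left a hkb, mul_ne_zero ha hb⟩,
      dvd_mul_right a k⟩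
  · obtain ⟨-, k, rfl⟩ := mem_filter.1 hm
    rw [Nat.mul_div_cancel_left k (Nat.pos_of_ne_zero ha)]

lemma sum_divisors_moebius_div_eq_zero {a N : ℕ} (hN : N ≠ 0) (haN : N ≠ a) :
    ∑ m ∈ N.divisors, (if a ∣ m then (μ (m / a) : ℤ) else 0) = 0 := by
  rw [← sum_filter]
  by_cases ha : a ∣ N
  · have ha₀ : a ≠ 0 := by rintro rfl; exact hN (zero_dvd_iff.1 ha)
    rw [sum_divisors_filter_dvd_comp_div (fun k => (μ k : ℤ)) ha₀ ha, ← coe_mul_zeta_apply,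
      moebius_mul_coe_zeta, one_apply_ne]
    rwa [Ne, Nat.div_eq_iff_eq_mul_left (Nat.pos_of_ne_zero ha₀) ha, one_mul]
  · refine sum_eq_zero fun m hm => absurd ?_ ha
    obtain ⟨hm, ham⟩ := mem_filter.1 hm
    exact ham.trans (Nat.dvd_of_mem_divisors hm)

lemma fib_ne_four (n : ℕ) : Nat.fib n ≠ 4 := by
  rcases le_or_gt n 4 with hn | hn
  · have : Nat.fib n ≤ 3 := (Nat.fib_mono hn).trans_eq (by decide)
    omega
  · have : 5 ≤ Nat.fib n := (Nat.fib_mono hn).trans_eq' (by decide)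
    omega

/-- `Δ(n) = -μ(n/4)` if `4 ∣ n`, else `0`, lies in the kernel of α-contraction. -/
theorem delta_in_kernel_alphaCon (n : ℕ) (hn : 0 < n) :
    alphaCon (fun m => if 4 ∣ m then -(ArithmeticFunction.moebius (m / 4) : ℤ) else 0) n
      = 0 := by
  refine alphaCon_eq_zero_of_sum_divisors_fib_eq_zero (fun N hN => ?_) hn
  rw [← neg_eq_zero, ← sum_neg_distrib]
  simp only [neg_ite, neg_neg, neg_zero]
  exact sum_divisors_moebius_div_eq_zero (Nat.fib_pos.2 (Nat.pos_of_ne_zero hN)).ne'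
    (fib_ne_four N)
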